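/- Let λ > 0 and suppose A, B is a local minimum of 𝓛_{L2}(A,B) = L(ABᵀ) + (λ/2)(‖A‖_F² + ‖B‖_F²) with L differentiable, where A ∈ ℝ^{m×r}, B ∈ ℝ^{n×r}, m, n ≥ r. Then AᵀA = BᵀB and W = ABᵀ is a local minimum of 𝓛_*(W) = L(W) + λ‖W‖_* restricted to the set of matrices of rank at most r. -/

import Mathlib

open Matrix

noncomputable def frobSq {m n : ℕ} (A : Matrix (Fin m) (Fin n) ℝ) : ℝ :=
  ∑ i, ∑ j, (A i j) ^ 2

noncomputable def frobNorm {m n : ℕ} (A : Matrix (Fin m) (Fin n) ℝ) : ℝ :=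
  Real.sqrt (frobSq A)

lemma wwT_posSemidef {m n : ℕ} (W : Matrix (Fin m) (Fin n) ℝ) :
    (W * Wᵀ).PosSemidef := by
  simpa [Matrix.conjTranspose_eq_transpose_of_trivial] using
    W.posSemidef_self_mul_conjTranspose

noncomputable def posSemidefSqrt {m : ℕ} {A : Matrix (Fin m) (Fin m) ℝ} (hA : A.PosSemidef) :
    Matrix (Fin m) (Fin m) ℝ :=
  hA.1.eigenvectorUnitary.1 * diagonal ((↑) ∘ (√·) ∘ hA.1.eigenvalues) *
    (star hA.1.eigenvectorUnitary : Matrix (Fin m) (Fin m) ℝ)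

noncomputable def nuclearNorm {m n : ℕ} (W : Matrix (Fin m) (Fin n) ℝ) : ℝ :=
  (posSemidefSqrt (wwT_posSemidef W)).trace

attribute [local instance] Matrix.normedAddCommGroup Matrix.normedSpace

/-!
Along the curve `t ↦ (A + t A X, B - t B X)` with `X = AᵀA - BᵀB` the product `ABᵀ` moves only at
second order, while the regulariser moves at rate `λ tr(X²)`; so at a local minimum `X = 0`.

For a balanced pair (`AᵀA = BᵀB`) one has `(AAᵀ)² = (ABᵀ)(ABᵀ)ᵀ`, hence `‖ABᵀ‖_* = tr(AAᵀ)` and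
`𝓛_{L2}(A, B) = 𝓛_*(ABᵀ)`. Every matrix of rank `≤ r` has a balanced factorization (from the
spectral decomposition of `WWᵀ`), and two balanced factorizations of the same matrix have the same
row Gram matrices `AAᵀ`, `BBᵀ`, so they differ by an orthogonal `Q`, under which `𝓛_{L2}` is
invariant. If `ABᵀ` were not a local minimum on rank `≤ r` matrices, take `W_k → ABᵀ` of rank `≤ r`
with `𝓛_*(W_k) < 𝓛_*(ABᵀ)` and balanced factorizations `(A_k, B_k)` of them. These are bounded,
so a subsequence converges to a balanced factorization of `ABᵀ`; this limit is `(AQ, BQ)`, hence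
again a local minimum of `𝓛_{L2}`, contradicting `𝓛_{L2}(A_k, B_k) = 𝓛_*(W_k) < 𝓛_*(ABᵀ)`.
-/

open Filter Topology

theorem LinearMap.exists_linearIsometry_apply_eq {𝕜 M V : Type*} [RCLike 𝕜] [AddCommGroup M]
    [Module 𝕜 M] [NormedAddCommGroup V] [InnerProductSpace 𝕜 V] [FiniteDimensional 𝕜 V]
    (S T : M →ₗ[𝕜] V) (h : ∀ x, ‖T x‖ = ‖S x‖) : ∃ g : V →ₗᵢ[𝕜] V, ∀ x, g (S x) = T x := by
  have hker : LinearMap.ker S ≤ LinearMap.ker T := fun x hx => by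
    rw [LinearMap.mem_ker] at hx ⊢
    rw [← norm_eq_zero, h x, hx, norm_zero]
  let φ : LinearMap.range S →ₗ[𝕜] V :=
    (LinearMap.ker S).liftQ T hker ∘ₗ S.quotKerEquivRange.symm.toLinearMap
  have hφ : ∀ x, φ ⟨S x, LinearMap.mem_range_self S x⟩ = T x := fun x => by
    simp [φ, LinearMap.quotKerEquivRange_symm_apply_image]
  let ψ : LinearMap.range S →ₗᵢ[𝕜] V := ⟨φ, by rintro ⟨_, x, rfl⟩; simp [hφ, h]⟩
  exact ⟨ψ.extend, fun x => (ψ.extend_apply ⟨S x, LinearMap.mem_range_self S x⟩).trans (hφ x)⟩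

namespace Matrix

theorem exists_mem_unitaryGroup_eq_mul_of_mul_conjTranspose_eq {𝕜 ι κ : Type*} [RCLike 𝕜]
    [Fintype ι] [DecidableEq ι] [Fintype κ] [DecidableEq κ] {X Y : Matrix ι κ 𝕜}
    (h : X * Xᴴ = Y * Yᴴ) : ∃ Q ∈ unitaryGroup κ 𝕜, Y = X * Q := by
  have hnorm_sq : ∀ (Z : Matrix ι κ 𝕜) (v : EuclideanSpace 𝕜 ι),
      ‖toEuclideanLin Zᴴ v‖ ^ 2 = RCLike.re (inner 𝕜 (toEuclideanLin (Z * Zᴴ) v) v) := by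
    intro Z v
    rw [← inner_self_eq_norm_sq (𝕜 := 𝕜), ← LinearMap.adjoint_inner_left,
      ← toEuclideanLin_conjTranspose_eq_adjoint, conjTranspose_conjTranspose, toLpLin_mul_same]
    rfl
  obtain ⟨g, hg⟩ := LinearMap.exists_linearIsometry_apply_eq (toEuclideanLin Xᴴ)
    (toEuclideanLin Yᴴ) fun v => by
      rw [← sq_eq_sq₀ (norm_nonneg _) (norm_nonneg _), hnorm_sq, hnorm_sq, h]
  set G := toEuclideanLin.symm g.toLinearMap
  have hG : toEuclideanLin G = g.toLinearMap := LinearEquiv.apply_symm_apply _ _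
  have hGX : G * Xᴴ = Yᴴ := toEuclideanLin.injective <| by
    rw [toLpLin_mul_same, hG]
    exact LinearMap.ext hg
  have hGG : star G * G = 1 := toEuclideanLin.injective <| by
    rw [star_eq_conjTranspose, toLpLin_mul_same, toEuclideanLin_conjTranspose_eq_adjoint, hG,
      LinearIsometry.adjoint_comp_self', toLpLin_one]
  refine ⟨Gᴴ, Unitary.star_mem (mem_unitaryGroup_iff'.2 hGG), ?_⟩
  rw [← conjTranspose_conjTranspose Y, ← hGX, conjTranspose_mul, conjTranspose_conjTranspose]

theorem exists_mul_transpose_eq_diagonal_indicator {κ : Type*} [Fintype κ] [DecidableEq κ]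
    {r : ℕ} (s : Finset κ) (hs : s.card ≤ r) :
    ∃ E : Matrix κ (Fin r) ℝ, E * Eᵀ = diagonal fun j => if j ∈ s then 1 else 0 := by
  let e : s ↪ Fin r := s.equivFin.toEmbedding.trans (Fin.castLEEmb hs)
  refine ⟨of fun j k => if h : j ∈ s then if e ⟨j, h⟩ = k then 1 else 0 else 0, ?_⟩
  ext j j'
  by_cases hj : j ∈ s <;> by_cases hj' : j' ∈ s <;>
    simp [mul_apply, diagonal, hj, hj', e.injective.eq_iff, eq_comm]
  rintro rfl
  exact hj' hj

theorem exists_balanced_factorization_of_columns_eq_zero {ι ι' κ : Type*} [Fintype ι]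
    [Fintype ι'] [Fintype κ] [DecidableEq κ] {r : ℕ} {X : Matrix ι κ ℝ} {Y : Matrix ι' κ ℝ}
    (hXY : Xᵀ * X = Yᵀ * Y) {s : Finset κ} (hs : s.card ≤ r) (hX : ∀ i, ∀ j ∉ s, X i j = 0) :
    ∃ (A : Matrix ι (Fin r) ℝ) (B : Matrix ι' (Fin r) ℝ), A * Bᵀ = X * Yᵀ ∧ Aᵀ * A = Bᵀ * B := by
  obtain ⟨E, hE⟩ := exists_mul_transpose_eq_diagonal_indicator s hs
  have hXE : X * (E * Eᵀ) = X := by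
    ext i j
    by_cases hj : j ∈ s <;> simp [hE, hj, hX i j]
  refine ⟨X * E, Y * E, ?_, ?_⟩
  · rw [transpose_mul, ← Matrix.mul_assoc, Matrix.mul_assoc X, hXE]
  · simp only [transpose_mul, Matrix.mul_assoc]
    rw [← Matrix.mul_assoc Xᵀ, hXY, Matrix.mul_assoc]

end Matrix

section Frobenius

variable {m n : ℕ}

theorem frobSq_eq_trace (A : Matrix (Fin m) (Fin n) ℝ) : frobSq A = (Aᵀ * A).trace := by
  simp only [frobSq, trace, diag, mul_apply, transpose_apply, sq]
  exact Finset.sum_comm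

theorem frobSq_nonneg (A : Matrix (Fin m) (Fin n) ℝ) : 0 ≤ frobSq A := by
  unfold frobSq
  positivity

theorem frobSq_eq_zero_iff {A : Matrix (Fin m) (Fin n) ℝ} : frobSq A = 0 ↔ A = 0 := by
  rw [frobSq_eq_trace, ← conjTranspose_eq_transpose_of_trivial,
    trace_conjTranspose_mul_self_eq_zero_iff]

theorem frobSq_add_smul (A M : Matrix (Fin m) (Fin n) ℝ) (t : ℝ) :
    frobSq (A + t • M) = frobSq A + 2 * (Aᵀ * M).trace * t + frobSq M * t ^ 2 := by
  simp only [frobSq_eq_trace, transpose_add, transpose_smul, Matrix.add_mul, Matrix.mul_add,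
    Matrix.smul_mul, Matrix.mul_smul, trace_add, trace_smul, smul_eq_mul]
  rw [← trace_transpose (Mᵀ * A), transpose_mul, transpose_transpose]
  ring

theorem hasDerivAt_frobSq_add_smul (A M : Matrix (Fin m) (Fin n) ℝ) :
    HasDerivAt (fun t : ℝ => frobSq (A + t • M)) (2 * (Aᵀ * M).trace) 0 := by
  simp only [frobSq_add_smul]
  exact ((((hasDerivAt_id' 0).const_mul _).const_add _).add
    ((hasDerivAt_pow 2 0).const_mul _)).congr_deriv (by simp)

theorem frobSq_mul_of_mul_transpose_eq_one {k : ℕ} (M : Matrix (Fin m) (Fin k) ℝ)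
    {Q : Matrix (Fin k) (Fin k) ℝ} (hQ : Q * Qᵀ = 1) : frobSq (M * Q) = frobSq M := by
  rw [frobSq_eq_trace, frobSq_eq_trace, transpose_mul, Matrix.mul_assoc, trace_mul_comm,
    Matrix.mul_assoc, Matrix.mul_assoc, hQ, Matrix.mul_one]

theorem norm_le_sqrt_frobSq (M : Matrix (Fin m) (Fin n) ℝ) : ‖M‖ ≤ √(frobSq M) := by
  refine (Matrix.norm_le_iff (Real.sqrt_nonneg _)).2 fun i j => Real.abs_le_sqrt ?_
  calc M i j ^ 2 ≤ ∑ j', M i j' ^ 2 :=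
        Finset.single_le_sum (fun _ _ => sq_nonneg _) (Finset.mem_univ j)
    _ ≤ frobSq M :=
        Finset.single_le_sum (f := fun i' => ∑ j', M i' j' ^ 2)
          (fun _ _ => by positivity) (Finset.mem_univ i)

end Frobenius

section Balanced

variable {m n r : ℕ}

open scoped MatrixOrder in
theorem posSemidefSqrt_eq_cfcSqrt {A : Matrix (Fin m) (Fin m) ℝ} (hA : A.PosSemidef) :
    posSemidefSqrt hA = CFC.sqrt A := by
  rw [CFC.sqrt_eq_real_sqrt A hA.nonneg, cfcₙ_eq_cfc, hA.1.cfc_eq, IsHermitian.cfc,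
    Unitary.conjStarAlgAut_apply]
  rfl

open scoped MatrixOrder in
theorem eq_posSemidefSqrt_of_sq_eq {A S : Matrix (Fin m) (Fin m) ℝ} (hA : A.PosSemidef)
    (hS : S.PosSemidef) (h : S ^ 2 = A) : S = posSemidefSqrt hA := by
  rw [posSemidefSqrt_eq_cfcSqrt]
  exact (CFC.sqrt_unique (by rw [← sq, h]) hS.nonneg).symm

theorem posSemidefSqrt_mul_transpose_of_balanced {A : Matrix (Fin m) (Fin r) ℝ}
    {B : Matrix (Fin n) (Fin r) ℝ} (hbal : Aᵀ * A = Bᵀ * B) :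
    posSemidefSqrt (wwT_posSemidef (A * Bᵀ)) = A * Aᵀ := by
  refine (eq_posSemidefSqrt_of_sq_eq _ (wwT_posSemidef A) ?_).symm
  rw [sq, transpose_mul, transpose_transpose]
  simp only [Matrix.mul_assoc]
  rw [← Matrix.mul_assoc Aᵀ, hbal, Matrix.mul_assoc]

theorem nuclearNorm_mul_transpose_of_balanced {A : Matrix (Fin m) (Fin r) ℝ}
    {B : Matrix (Fin n) (Fin r) ℝ} (hbal : Aᵀ * A = Bᵀ * B) :
    nuclearNorm (A * Bᵀ) = (frobSq A + frobSq B) / 2 := by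
  rw [nuclearNorm, posSemidefSqrt_mul_transpose_of_balanced hbal, frobSq_eq_trace,
    frobSq_eq_trace, ← hbal, trace_mul_comm A]
  ring

theorem norm_le_of_balanced {A : Matrix (Fin m) (Fin r) ℝ} {B : Matrix (Fin n) (Fin r) ℝ}
    (hbal : Aᵀ * A = Bᵀ * B) : ‖(A, B)‖ ≤ √(2 * nuclearNorm (A * Bᵀ)) := by
  have hA := frobSq_nonneg A
  have hB := frobSq_nonneg B
  rw [nuclearNorm_mul_transpose_of_balanced hbal, Prod.norm_def]
  exact max_le ((norm_le_sqrt_frobSq A).trans (Real.sqrt_le_sqrt (by linarith)))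
    ((norm_le_sqrt_frobSq B).trans (Real.sqrt_le_sqrt (by linarith)))

theorem exists_orthogonal_of_balanced {A A' : Matrix (Fin m) (Fin r) ℝ}
    {B B' : Matrix (Fin n) (Fin r) ℝ} (hbal : Aᵀ * A = Bᵀ * B) (hbal' : A'ᵀ * A' = B'ᵀ * B')
    (h : A' * B'ᵀ = A * Bᵀ) :
    ∃ Q ∈ orthogonalGroup (Fin r) ℝ, A' = A * Q ∧ B' = B * Q := by
  have hA : A * Aᵀ = A' * A'ᵀ := by
    rw [← posSemidefSqrt_mul_transpose_of_balanced hbal,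
      ← posSemidefSqrt_mul_transpose_of_balanced hbal', h]
  have hB : B * Bᵀ = B' * B'ᵀ := by
    have h' : B' * A'ᵀ = B * Aᵀ := by
      simpa only [transpose_mul, transpose_transpose] using congrArg transpose h
    rw [← posSemidefSqrt_mul_transpose_of_balanced hbal.symm,
      ← posSemidefSqrt_mul_transpose_of_balanced hbal'.symm, h']
  have hAB : A * Bᵀ = A' * B'ᵀ := h.symm
  have hBA : B * Aᵀ = B' * A'ᵀ := by
    simpa only [transpose_mul, transpose_transpose] using congrArg transpose hAB
  obtain ⟨Q, hQ, hQX⟩ := exists_mem_unitaryGroup_eq_mul_of_mul_conjTranspose_eq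
    (X := fromRows A B) (Y := fromRows A' B') (by
      simp only [conjTranspose_eq_transpose_of_trivial, transpose_fromRows,
        fromRows_mul_fromCols, hA, hB, hAB, hBA])
  rw [fromRows_mul] at hQX
  exact ⟨Q, hQ, (fromRows_inj hQX).1, (fromRows_inj hQX).2⟩

theorem exists_diagonalization_mul_transpose_self (W : Matrix (Fin m) (Fin n) ℝ) :
    ∃ (U : Matrix (Fin m) (Fin m) ℝ) (μ : Fin m → ℝ), Uᵀ * U = 1 ∧
      W * Wᵀ = U * diagonal μ * Uᵀ ∧ (∀ i, 0 ≤ μ i) ∧ W.rank = Fintype.card {i // μ i ≠ 0} := by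
  have hW := wwT_posSemidef W
  refine ⟨hW.1.eigenvectorUnitary, hW.1.eigenvalues, ?_, ?_, hW.eigenvalues_nonneg, ?_⟩
  · exact mem_unitaryGroup_iff'.1 hW.1.eigenvectorUnitary.2
  · conv_lhs => rw [hW.1.spectral_theorem, Unitary.conjStarAlgAut_apply]
    simp [star_eq_conjTranspose]
  · rw [← rank_self_mul_transpose]
    exact hW.1.rank_eq_card_non_zero_eigs

theorem transpose_mul_self_eq_of_mul_transpose_eq_diagonal {W : Matrix (Fin m) (Fin n) ℝ}
    {U : Matrix (Fin m) (Fin m) ℝ} {μ d : Fin m → ℝ} (hU : Uᵀ * U = 1)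
    (hW : W * Wᵀ = U * diagonal μ * Uᵀ) (hd : ∀ i, d i * d i * (d i * d i) = μ i) :
    (U * diagonal d)ᵀ * (U * diagonal d) = (Wᵀ * U * diagonal d⁻¹)ᵀ * (Wᵀ * U * diagonal d⁻¹) := by
  have hUWWU : Uᵀ * (W * Wᵀ) * U = diagonal μ := by
    rw [hW]
    simp only [Matrix.mul_assoc]
    rw [hU, Matrix.mul_one, ← Matrix.mul_assoc, hU, Matrix.one_mul]
  calc (U * diagonal d)ᵀ * (U * diagonal d) = diagonal fun i => d i * d i := by
        rw [transpose_mul, diagonal_transpose, Matrix.mul_assoc, ← Matrix.mul_assoc Uᵀ, hU,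
          Matrix.one_mul, diagonal_mul_diagonal]
    _ = diagonal fun i => (d i)⁻¹ * μ i * (d i)⁻¹ := by
        congr 1
        funext i
        by_cases hi : d i = 0
        · simp [hi]
        · rw [← hd i]
          field_simp
    _ = (Wᵀ * U * diagonal d⁻¹)ᵀ * (Wᵀ * U * diagonal d⁻¹) := by
        rw [← diagonal_mul_diagonal, ← diagonal_mul_diagonal, ← hUWWU]
        simp only [transpose_mul, transpose_transpose, diagonal_transpose, Matrix.mul_assoc]
        rfl

theorem mul_transpose_eq_of_mul_transpose_eq_diagonal {W : Matrix (Fin m) (Fin n) ℝ}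
    {U : Matrix (Fin m) (Fin m) ℝ} {μ d : Fin m → ℝ} (hU : Uᵀ * U = 1)
    (hW : W * Wᵀ = U * diagonal μ * Uᵀ) (hd : ∀ i, d i * d i * (d i * d i) = μ i) :
    U * diagonal d * (Wᵀ * U * diagonal d⁻¹)ᵀ = W := by
  have hproj : (U * diagonal (fun i => d i * (d i)⁻¹) * Uᵀ - 1) * (W * Wᵀ) = 0 := by
    rw [Matrix.sub_mul, Matrix.one_mul, hW, sub_eq_zero]
    simp only [Matrix.mul_assoc]
    rw [← Matrix.mul_assoc Uᵀ, hU, Matrix.one_mul, ← Matrix.mul_assoc (diagonal _),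
      diagonal_mul_diagonal]
    congr 3
    funext i
    by_cases hi : d i = 0
    · simp [← hd i, hi]
    · rw [mul_inv_cancel₀ hi, one_mul]
  replace hproj := (mul_self_mul_conjTranspose_eq_zero W _).1
    (by rwa [conjTranspose_eq_transpose_of_trivial])
  rw [Matrix.sub_mul, Matrix.one_mul, sub_eq_zero, ← diagonal_mul_diagonal] at hproj
  simp only [transpose_mul, transpose_transpose, diagonal_transpose, Matrix.mul_assoc] at hproj ⊢
  exact hproj

theorem exists_balanced_factorization {W : Matrix (Fin m) (Fin n) ℝ} (hW : W.rank ≤ r) :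
    ∃ (A : Matrix (Fin m) (Fin r) ℝ) (B : Matrix (Fin n) (Fin r) ℝ),
      A * Bᵀ = W ∧ Aᵀ * A = Bᵀ * B := by
  obtain ⟨U, μ, hU, hWW, hμ, hrank⟩ := exists_diagonalization_mul_transpose_self W
  -- `d = μ ^ (1/4)`; since `0⁻¹ = 0`, `d⁻¹` is its pseudo-inverse.
  set d : Fin m → ℝ := fun i => √√(μ i)
  have hd : ∀ i, d i * d i * (d i * d i) = μ i := fun i => by
    simp only [d, Real.mul_self_sqrt (Real.sqrt_nonneg _), Real.mul_self_sqrt (hμ i)]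
  obtain ⟨A, B, hAB, hbal⟩ := exists_balanced_factorization_of_columns_eq_zero (r := r)
    (transpose_mul_self_eq_of_mul_transpose_eq_diagonal hU hWW hd)
    (s := Finset.univ.filter (μ · ≠ 0)) (by rw [← Fintype.card_subtype, ← hrank]; exact hW)
    (fun i j hj => by simp_all [d])
  exact ⟨A, B, hAB.trans (mul_transpose_eq_of_mul_transpose_eq_diagonal hU hWW hd), hbal⟩

end Balanced

section Loss

variable {m n r : ℕ}

-- `𝓛_{L2}` and `𝓛_*`
noncomputable def factorLoss (L : Matrix (Fin m) (Fin n) ℝ → ℝ) (lam : ℝ)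
    (p : Matrix (Fin m) (Fin r) ℝ × Matrix (Fin n) (Fin r) ℝ) : ℝ :=
  L (p.1 * p.2ᵀ) + lam / 2 * (frobSq p.1 + frobSq p.2)

noncomputable def nuclearLoss (L : Matrix (Fin m) (Fin n) ℝ → ℝ) (lam : ℝ)
    (W : Matrix (Fin m) (Fin n) ℝ) : ℝ :=
  L W + lam * nuclearNorm W

variable {L : Matrix (Fin m) (Fin n) ℝ → ℝ} {lam : ℝ}

theorem factorLoss_eq_nuclearLoss_of_balanced {A : Matrix (Fin m) (Fin r) ℝ}
    {B : Matrix (Fin n) (Fin r) ℝ} (hbal : Aᵀ * A = Bᵀ * B) :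
    factorLoss L lam (A, B) = nuclearLoss L lam (A * Bᵀ) := by
  rw [factorLoss, nuclearLoss, nuclearNorm_mul_transpose_of_balanced hbal]
  ring

theorem factorLoss_mul_orthogonal (p : Matrix (Fin m) (Fin r) ℝ × Matrix (Fin n) (Fin r) ℝ)
    {Q : Matrix (Fin r) (Fin r) ℝ} (hQ : Q ∈ orthogonalGroup (Fin r) ℝ) :
    factorLoss L lam (p.1 * Q, p.2 * Q) = factorLoss L lam p := by
  have hQQ := (mem_orthogonalGroup_iff _ _).1 hQ
  simp only [factorLoss, frobSq_mul_of_mul_transpose_eq_one _ hQQ, transpose_mul,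
    Matrix.mul_assoc]
  rw [← Matrix.mul_assoc Q, hQQ, Matrix.one_mul]

theorem IsLocalMin.factorLoss_of_balanced_of_mul_eq {A A' : Matrix (Fin m) (Fin r) ℝ}
    {B B' : Matrix (Fin n) (Fin r) ℝ} (hmin : IsLocalMin (factorLoss L lam) (A, B))
    (hbal : Aᵀ * A = Bᵀ * B) (hbal' : A'ᵀ * A' = B'ᵀ * B') (h : A' * B'ᵀ = A * Bᵀ) :
    IsLocalMin (factorLoss L lam) (A', B') := by
  obtain ⟨Q, hQ, rfl, rfl⟩ := exists_orthogonal_of_balanced hbal hbal' h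
  have hQQ : Q * Qᵀ = 1 := (mem_orthogonalGroup_iff _ _).1 hQ
  have hQt : Qᵀ ∈ orthogonalGroup (Fin r) ℝ := by
    rw [mem_orthogonalGroup_iff, transpose_transpose]
    exact (mem_orthogonalGroup_iff' _ _).1 hQ
  have hcomp : factorLoss L lam ∘ (fun p => (p.1 * Qᵀ, p.2 * Qᵀ)) = factorLoss L lam :=
    funext fun p => factorLoss_mul_orthogonal p hQt
  rw [← hcomp]
  refine IsLocalMin.comp_continuous ?_ (by fun_prop)
  show IsLocalMin _ (A * Q * Qᵀ, B * Q * Qᵀ)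
  rwa [Matrix.mul_assoc, Matrix.mul_assoc, hQQ, Matrix.mul_one, Matrix.mul_one]

theorem add_smul_mul_transpose_add_smul {A : Matrix (Fin m) (Fin r) ℝ}
    {B : Matrix (Fin n) (Fin r) ℝ} {X : Matrix (Fin r) (Fin r) ℝ} (hX : Xᵀ = X) (t : ℝ) :
    (A + t • (A * X)) * (B + t • (B * -X))ᵀ = A * Bᵀ - (t * t) • (A * X * X * Bᵀ) := by
  simp only [transpose_add, transpose_smul, transpose_mul, transpose_neg, hX, Matrix.add_mul,
    Matrix.mul_add, Matrix.smul_mul, Matrix.mul_smul, Matrix.mul_neg, ← Matrix.mul_assoc]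
  module

theorem hasDerivAt_factorLoss_add_smul {A : Matrix (Fin m) (Fin r) ℝ}
    {B : Matrix (Fin n) (Fin r) ℝ} {X : Matrix (Fin r) (Fin r) ℝ} (hX : Xᵀ = X)
    (hL : DifferentiableAt ℝ L (A * Bᵀ)) :
    HasDerivAt (fun t : ℝ => factorLoss L lam (A + t • (A * X), B + t • (B * -X)))
      (lam * ((Aᵀ * A - Bᵀ * B) * X).trace) 0 := by
  have hprod : HasDerivAt (fun t : ℝ => A * Bᵀ - (t * t) • (A * X * X * Bᵀ)) 0 0 :=
    ((((hasDerivAt_id' (0 : ℝ)).mul (hasDerivAt_id' 0)).smul_const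
      (A * X * X * Bᵀ)).const_sub (A * Bᵀ)).congr_deriv (by simp)
  have hLt := hL.hasFDerivAt.comp_hasDerivAt_of_eq 0 hprod (by simp)
  have hfrob := (hasDerivAt_frobSq_add_smul A (A * X)).add
    (hasDerivAt_frobSq_add_smul B (B * -X))
  simp only [factorLoss, add_smul_mul_transpose_add_smul hX]
  refine (hLt.add (hfrob.const_mul (lam / 2))).congr_deriv ?_
  erw [map_zero]
  simp only [zero_add, Matrix.mul_neg, trace_neg, ← Matrix.mul_assoc, Matrix.sub_mul, trace_sub]
  ring

theorem balanced_of_isLocalMin_factorLoss {A : Matrix (Fin m) (Fin r) ℝ}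
    {B : Matrix (Fin n) (Fin r) ℝ} (hlam : lam ≠ 0) (hL : DifferentiableAt ℝ L (A * Bᵀ))
    (hmin : IsLocalMin (factorLoss L lam) (A, B)) : Aᵀ * A = Bᵀ * B := by
  set X := Aᵀ * A - Bᵀ * B
  have hX : Xᵀ = X := by simp [X, transpose_sub, transpose_mul]
  have hcurve : IsLocalMin (fun t : ℝ => factorLoss L lam (A + t • (A * X), B + t • (B * -X))) 0 :=
    IsLocalMin.comp_continuous (f := factorLoss L lam)
      (g := fun t : ℝ => (A + t • (A * X), B + t • (B * -X))) (b := 0) (by simpa using hmin)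
      (by fun_prop)
  have hzero := hcurve.hasDerivAt_eq_zero (hasDerivAt_factorLoss_add_smul hX hL)
  have hXX : frobSq X = 0 := by
    rw [frobSq_eq_trace, hX]
    exact (mul_eq_zero.1 hzero).resolve_left hlam
  exact sub_eq_zero.1 (frobSq_eq_zero_iff.1 hXX)

theorem IsLocalMin.isLocalMinOn_nuclearLoss {A : Matrix (Fin m) (Fin r) ℝ}
    {B : Matrix (Fin n) (Fin r) ℝ} (hmin : IsLocalMin (factorLoss L lam) (A, B))
    (hbal : Aᵀ * A = Bᵀ * B) (hlam : 0 < lam) (hL : ContinuousAt L (A * Bᵀ)) :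
    IsLocalMinOn (nuclearLoss L lam) {W | W.rank ≤ r} (A * Bᵀ) := by
  -- not found by instance search through the type synonym `Matrix`
  have : FirstCountableTopology (Matrix (Fin m) (Fin n) ℝ) :=
    inferInstanceAs (FirstCountableTopology (Fin m → Fin n → ℝ))
  by_contra hnot
  obtain ⟨W, hWlim, hW⟩ := frequently_iff_seq_forall.1
    ((not_eventually.1 hnot).and_eventually self_mem_nhdsWithin)
  replace hWlim := hWlim.mono_right nhdsWithin_le_nhds
  choose A' B' hmul hbal' using fun k => exists_balanced_factorization (hW k).2
  -- `λ ‖W k‖_* < 𝓛_*(ABᵀ) - L (W k)`, and eventually `L (W k) > L (ABᵀ) - 1`.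
  have hbound : ∀ᶠ k in atTop, ‖(A' k, B' k)‖ ≤
      √(2 * ((nuclearLoss L lam (A * Bᵀ) - L (A * Bᵀ) + 1) / lam)) := by
    filter_upwards [(hL.tendsto.comp hWlim).eventually (lt_mem_nhds (sub_one_lt (L (A * Bᵀ))))]
      with k hk
    refine (norm_le_of_balanced (hbal' k)).trans (Real.sqrt_le_sqrt ?_)
    have hlt := not_le.1 (hW k).1
    rw [hmul k, mul_le_mul_iff_right₀ two_pos, le_div_iff₀ hlam]
    simp only [nuclearLoss, Function.comp_apply] at hlt hk ⊢
    linarith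
  obtain ⟨p, -, ψ, hψ, hpψ⟩ := tendsto_subseq_of_frequently_bounded
    Metric.isBounded_closedBall (hbound.mono fun k hk => mem_closedBall_zero_iff.2 hk).frequently
  have hpmul : p.1 * p.2ᵀ = A * Bᵀ := by
    refine tendsto_nhds_unique ?_ (hWlim.comp hψ.tendsto_atTop)
    have := ((continuous_fst.matrix_mul continuous_snd.matrix_transpose).tendsto p).comp hpψ
    simpa [Function.comp_def, hmul] using this
  have hpbal : p.1ᵀ * p.1 = p.2ᵀ * p.2 :=
    (isClosed_eq (continuous_fst.matrix_transpose.matrix_mul continuous_fst)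
      (continuous_snd.matrix_transpose.matrix_mul continuous_snd)).mem_of_tendsto hpψ
      (Eventually.of_forall fun k => hbal' (ψ k))
  have hpmin : IsLocalMin (factorLoss L lam) (p.1, p.2) :=
    hmin.factorLoss_of_balanced_of_mul_eq hbal hpbal hpmul
  obtain ⟨k, hk⟩ := (hpψ.eventually hpmin).exists
  rw [Function.comp_apply, factorLoss_eq_nuclearLoss_of_balanced hpbal, hpmul,
    factorLoss_eq_nuclearLoss_of_balanced (hbal' (ψ k)), hmul] at hk
  exact (hW (ψ k)).1 hk

end Loss

theorem localMin_L2_iff_localMin_nuclear_general {m n r : ℕ}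
    (lam : ℝ) (hlam : 0 < lam)
    (L : Matrix (Fin m) (Fin n) ℝ → ℝ) (hL : Differentiable ℝ L)
    (A : Matrix (Fin m) (Fin r) ℝ) (B : Matrix (Fin n) (Fin r) ℝ)
    (hmin : IsLocalMin
      (fun p : Matrix (Fin m) (Fin r) ℝ × Matrix (Fin n) (Fin r) ℝ =>
        L (p.1 * p.2ᵀ) + lam / 2 * (frobSq p.1 + frobSq p.2)) (A, B)) :
    Aᵀ * A = Bᵀ * B ∧
    IsLocalMinOn (fun W : Matrix (Fin m) (Fin n) ℝ => L W + lam * nuclearNorm W)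
      {W : Matrix (Fin m) (Fin n) ℝ | W.rank ≤ r} (A * Bᵀ) := by
  have hbal : Aᵀ * A = Bᵀ * B := balanced_of_isLocalMin_factorLoss hlam.ne' (hL _) hmin
  exact ⟨hbal, hmin.isLocalMinOn_nuclearLoss hbal hlam (hL _).continuousAt⟩

/-- a local minimum `(A, B)` of the L2-regularized factorized loss
`L(ABᵀ) + (λ/2)(‖A‖_F² + ‖B‖_F²)` (λ > 0, L differentiable, `m, n ≥ r`) is
balanced (`AᵀA = BᵀB`) and `W = ABᵀ` is a local minimum of the nuclear-norm
regularized loss `L(W) + λ‖W‖_*` restricted to matrices of rank at most `r`. -/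
theorem localMin_L2_iff_localMin_nuclear {m n r : ℕ} (hm : r ≤ m) (hn : r ≤ n)
    (lam : ℝ) (hlam : 0 < lam)
    (L : Matrix (Fin m) (Fin n) ℝ → ℝ) (hL : Differentiable ℝ L)
    (A : Matrix (Fin m) (Fin r) ℝ) (B : Matrix (Fin n) (Fin r) ℝ)
    (hmin : IsLocalMin
      (fun p : Matrix (Fin m) (Fin r) ℝ × Matrix (Fin n) (Fin r) ℝ =>
        L (p.1 * p.2ᵀ) + lam / 2 * (frobSq p.1 + frobSq p.2)) (A, B)) :
    Aᵀ * A = Bᵀ * B ∧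
    IsLocalMinOn (fun W : Matrix (Fin m) (Fin n) ℝ => L W + lam * nuclearNorm W)
      {W : Matrix (Fin m) (Fin n) ℝ | W.rank ≤ r} (A * Bᵀ) :=
  localMin_L2_iff_localMin_nuclear_general lam hlam L hL A B hmin
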